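/- Let x = (x₁,...,x_m) be a random vector with independent entries satisfying E xⱼ = 0, E xⱼ² = 1, E xⱼ⁴ = γ₄ⱼ, and let u, v ∈ ℝᵐ be deterministic orthonormal vectors (‖u‖=‖v‖=1, uᵀv = 0). Then E[((uᵀx)² − 1)·((vᵀx)² − 1)] = Σⱼ (γ₄ⱼ − 3)·uⱼ²·vⱼ². -/

import Mathlib

/-!
With `S = uᵀx` and `T = vᵀx`, expanding gives
`E[(S² - 1)(T² - 1)] = E[S²T²] - E[S²] - E[T²] + 1`. The second moments of `x` are `δᵢⱼ`; its
fourth moments are the Gaussian pairings `δᵢⱼδₖₗ + δᵢₖδⱼₗ + δᵢₗδⱼₖ` plus the excess kurtosis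
`γ₄ᵢ - 3` on the full diagonal. Contracting against `u ⊗ u ⊗ v ⊗ v` gives
`E[S²T²] = ‖u‖²‖v‖² + 2(uᵀv)² + Σⱼ (γ₄ⱼ - 3) uⱼ² vⱼ²`, and orthonormality leaves only the last sum.
-/

open MeasureTheory ProbabilityTheory Finset

section FiniteSums

variable {ι : Type*}

def fourthMomentTensor [DecidableEq ι] (κ : ι → ℝ) (i j k l : ι) : ℝ :=
  (if i = j ∧ k = l then 1 else 0) + (if i = k ∧ j = l then 1 else 0) +
    (if i = l ∧ j = k then 1 else 0) + if i = j ∧ j = k ∧ k = l then κ i else 0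

theorem sum_mul_fourthMomentTensor [Fintype ι] [DecidableEq ι] (u v κ : ι → ℝ) :
    ∑ i, ∑ j, ∑ k, ∑ l, u i * u j * v k * v l * fourthMomentTensor κ i j k l =
      (∑ i, u i ^ 2) * (∑ i, v i ^ 2) + 2 * (∑ i, u i * v i) ^ 2 +
        ∑ i, κ i * u i ^ 2 * v i ^ 2 := by
  simp only [fourthMomentTensor, mul_add, sum_add_distrib, ite_and, mul_ite, mul_one, mul_zero,
    sum_ite_irrel, sum_const_zero, sum_ite_eq, mem_univ, if_true]
  have h₁ : ∑ i, ∑ j, u i * u i * v j * v j = (∑ i, u i ^ 2) * ∑ i, v i ^ 2 := by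
    simp only [sum_mul_sum, sq, mul_assoc]
  have h₂ : ∑ i, ∑ j, u i * u j * v i * v j = (∑ i, u i * v i) ^ 2 := by
    rw [sq, sum_mul_sum]
    exact sum_congr rfl fun i _ => sum_congr rfl fun j _ => by ring
  have h₃ : ∑ i, ∑ j, u i * u j * v j * v i = (∑ i, u i * v i) ^ 2 := by
    rw [← h₂]
    exact sum_congr rfl fun i _ => sum_congr rfl fun j _ => by ring
  have h₄ : ∑ i, u i * u i * v i * v i * κ i = ∑ i, κ i * u i ^ 2 * v i ^ 2 :=
    sum_congr rfl fun i _ => by ring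
  rw [h₁, h₂, h₃, h₄]
  ring

theorem sq_sum_mul [Fintype ι] (u x : ι → ℝ) :
    (∑ i, u i * x i) ^ 2 = ∑ i, ∑ j, u i * u j * (x i * x j) := by
  rw [sq, sum_mul_sum]
  exact sum_congr rfl fun i _ => sum_congr rfl fun j _ => by ring

theorem sq_sum_mul_mul_sq_sum_mul [Fintype ι] (u v x : ι → ℝ) :
    (∑ i, u i * x i) ^ 2 * (∑ i, v i * x i) ^ 2 =
      ∑ i, ∑ j, ∑ k, ∑ l, u i * u j * v k * v l * (x i * x j * x k * x l) := by
  simp_rw [sq, sum_mul_sum]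
  refine sum_congr rfl fun i _ => ?_
  rw [sum_comm]
  exact sum_congr rfl fun j _ => sum_congr rfl fun k _ => sum_congr rfl fun l _ => by ring

end FiniteSums

theorem integrable_mul_mul_mul_of_memLp_four {Ω : Type*} [MeasurableSpace Ω] {μ : Measure Ω}
    {f g h k : Ω → ℝ} (hf : MemLp f 4 μ) (hg : MemLp g 4 μ) (hh : MemLp h 4 μ)
    (hk : MemLp k 4 μ) : Integrable (fun ω => f ω * g ω * h ω * k ω) μ := by
  have hprod := MemLp.prod' (s := univ) (f := ![f, g, h, k]) (p := fun _ => 4)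
    (by intro q _; fin_cases q <;> assumption)
  rw [sum_const, card_univ, Fintype.card_fin, nsmul_eq_mul] at hprod
  norm_num [ENNReal.mul_inv_cancel] at hprod
  simpa [Fin.prod_univ_four] using memLp_one_iff_integrable.1 hprod

namespace ProbabilityTheory

variable {Ω ι : Type*} [MeasurableSpace Ω] {μ : Measure Ω} {X : ι → Ω → ℝ}

theorem iIndepFun.integral_comp_mul_eq_zero (hX : iIndepFun X μ)
    (hXm : ∀ i, AEMeasurable (X i) μ) {S : Finset ι} {d : ι} (hd : d ∉ S)
    (hd₀ : ∫ ω, X d ω ∂μ = 0) {φ : (S → ℝ) → ℝ} (hφ : Measurable φ) :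
    ∫ ω, φ (fun i : S => X i ω) * X d ω ∂μ = 0 := by
  have hindep := (hX.indepFun_finset₀ S {d} (disjoint_singleton_right.2 hd) hXm).comp hφ
    (measurable_pi_apply ⟨d, mem_singleton_self d⟩)
  refine (hindep.integral_fun_mul_eq_mul_integral ?_ (hXm d).aestronglyMeasurable).trans ?_
  · exact (hφ.comp_aemeasurable (aemeasurable_pi_lambda _ fun i => hXm i)).aestronglyMeasurable
  · simp [hd₀]

theorem iIndepFun.integral_mul_mul_mul_eq_zero (hX : iIndepFun X μ)
    (hXm : ∀ i, AEMeasurable (X i) μ) {a b c d : ι} (hd₀ : ∫ ω, X d ω ∂μ = 0)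
    (had : a ≠ d) (hbd : b ≠ d) (hcd : c ≠ d) :
    ∫ ω, X a ω * X b ω * X c ω * X d ω ∂μ = 0 := by
  classical
  let S : Finset ι := {a, b, c}
  have hS : a ∈ S ∧ b ∈ S ∧ c ∈ S := by simp [S]
  exact hX.integral_comp_mul_eq_zero hXm (by simp [S, had.symm, hbd.symm, hcd.symm]) hd₀
    (φ := fun x => x ⟨a, hS.1⟩ * x ⟨b, hS.2.1⟩ * x ⟨c, hS.2.2⟩) (by fun_prop)

theorem iIndepFun.integral_mul_eq_ite [DecidableEq ι] (hX : iIndepFun X μ)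
    (hXm : ∀ i, AEMeasurable (X i) μ) (hmean : ∀ i, ∫ ω, X i ω ∂μ = 0)
    (hvar : ∀ i, ∫ ω, X i ω ^ 2 ∂μ = 1) (i j : ι) :
    ∫ ω, X i ω * X j ω ∂μ = if i = j then 1 else 0 := by
  rcases eq_or_ne i j with rfl | hij
  · simpa [sq] using hvar i
  · rw [(hX.indepFun hij).integral_fun_mul_eq_mul_integral (hXm i).aestronglyMeasurable
      (hXm j).aestronglyMeasurable, hmean i, zero_mul, if_neg hij]

theorem iIndepFun.integral_sq_mul_sq (hX : iIndepFun X μ) (hXm : ∀ i, AEMeasurable (X i) μ)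
    {i j : ι} (hij : i ≠ j) :
    ∫ ω, X i ω ^ 2 * X j ω ^ 2 ∂μ = (∫ ω, X i ω ^ 2 ∂μ) * ∫ ω, X j ω ^ 2 ∂μ :=
  ((hX.indepFun hij).comp (measurable_id.pow_const 2) (measurable_id.pow_const 2)
    ).integral_fun_mul_eq_mul_integral ((hXm i).pow_const 2).aestronglyMeasurable
    ((hXm j).pow_const 2).aestronglyMeasurable

theorem iIndepFun.integral_mul_mul_mul_eq_fourthMomentTensor [DecidableEq ι] (hX : iIndepFun X μ)
    (hXm : ∀ i, AEMeasurable (X i) μ) (hmean : ∀ i, ∫ ω, X i ω ∂μ = 0)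
    (hvar : ∀ i, ∫ ω, X i ω ^ 2 ∂μ = 1) (i j k l : ι) :
    ∫ ω, X i ω * X j ω * X k ω * X l ω ∂μ =
      fourthMomentTensor (fun i => ∫ ω, X i ω ^ 4 ∂μ - 3) i j k l := by
  have lone {a b c d : ι} (had : a ≠ d) (hbd : b ≠ d) (hcd : c ≠ d) :=
    hX.integral_mul_mul_mul_eq_zero hXm (hmean d) had hbd hcd
  have pair {a b : ι} (hab : a ≠ b) : ∫ ω, X a ω ^ 2 * X b ω ^ 2 ∂μ = 1 := by
    rw [hX.integral_sq_mul_sq hXm hab, hvar, hvar, one_mul]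
  have hfourth : ∫ ω, X i ω * X i ω * X i ω * X i ω ∂μ = ∫ ω, X i ω ^ 4 ∂μ := by
    congr 1 with ω; ring
  simp only [fourthMomentTensor]
  -- Unless the indices pair up, one of them occurs only once and the moment vanishes.
  rcases eq_or_ne i j with rfl | hij
  · rcases eq_or_ne k l with rfl | hkl
    · rcases eq_or_ne i k with rfl | hik
      · simp [hfourth]; ring
      · convert pair hik using 1 <;> simp [hik, sq, mul_comm, mul_left_comm]
    · rcases eq_or_ne i l with rfl | hil
      · convert lone hkl.symm hkl.symm hkl.symm using 1 <;>
          simp [hkl, hkl.symm, mul_comm, mul_left_comm]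
      · simpa [hkl, hil] using lone hil hil hkl
  · rcases eq_or_ne i k with rfl | hik
    · rcases eq_or_ne j l with rfl | hjl
      · convert pair hij using 1 <;> simp [hij, hij.symm, sq, mul_comm, mul_left_comm]
      · rcases eq_or_ne i l with rfl | hil
        · convert lone hij hij hij using 1 <;> simp [hij, hjl, mul_comm, mul_left_comm]
        · simpa [hij, hjl, hil] using lone hil hjl hil
    · rcases eq_or_ne i l with rfl | hil
      · rcases eq_or_ne j k with rfl | hjk
        · convert pair hij using 1 <;> simp [hij, sq, mul_comm, mul_left_comm]
        · convert lone hij hjk.symm hij using 1 <;> simp [hij, hik, hjk, mul_comm, mul_left_comm]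
      · convert lone hij.symm hik.symm hil.symm using 1 <;>
          simp [hij, hik, hil, mul_comm, mul_left_comm]

theorem iIndepFun.integral_sq_sum_mul [Fintype ι] (hX : iIndepFun X μ)
    (hL2 : ∀ i, MemLp (X i) 2 μ) (hmean : ∀ i, ∫ ω, X i ω ∂μ = 0)
    (hvar : ∀ i, ∫ ω, X i ω ^ 2 ∂μ = 1) (u : ι → ℝ) :
    ∫ ω, (∑ i, u i * X i ω) ^ 2 ∂μ = ∑ i, u i ^ 2 := by
  classical
  have hint (i j : ι) : Integrable (fun ω => X i ω * X j ω) μ := (hL2 i).integrable_mul (hL2 j)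
  have hXm (i : ι) := (hL2 i).aestronglyMeasurable.aemeasurable
  simp only [sq_sum_mul]
  simp (disch := fun_prop) [integral_finsetSum, integral_const_mul,
    hX.integral_mul_eq_ite hXm hmean hvar, sq]

theorem iIndepFun.integral_sq_sum_mul_mul_sq_sum_mul [Fintype ι] (hX : iIndepFun X μ)
    (hL4 : ∀ i, MemLp (X i) 4 μ) (hmean : ∀ i, ∫ ω, X i ω ∂μ = 0)
    (hvar : ∀ i, ∫ ω, X i ω ^ 2 ∂μ = 1) (u v : ι → ℝ) :
    ∫ ω, (∑ i, u i * X i ω) ^ 2 * (∑ i, v i * X i ω) ^ 2 ∂μ =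
      (∑ i, u i ^ 2) * (∑ i, v i ^ 2) + 2 * (∑ i, u i * v i) ^ 2 +
        ∑ i, (∫ ω, X i ω ^ 4 ∂μ - 3) * u i ^ 2 * v i ^ 2 := by
  classical
  have hXm (i : ι) := (hL4 i).aestronglyMeasurable.aemeasurable
  have hint (i j k l : ι) : Integrable (fun ω => X i ω * X j ω * X k ω * X l ω) μ :=
    integrable_mul_mul_mul_of_memLp_four (hL4 i) (hL4 j) (hL4 k) (hL4 l)
  simp only [sq_sum_mul_mul_sq_sum_mul]
  simp (disch := fun_prop) only [integral_finsetSum, integral_const_mul,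
    hX.integral_mul_mul_mul_eq_fourthMomentTensor hXm hmean hvar, sum_mul_fourthMomentTensor]

end ProbabilityTheory

/-- Covariance of the centered quadratic forms `(uᵀx)² - 1` and `(vᵀx)² - 1` for orthonormal
deterministic vectors `u, v`: `E[((uᵀx)² - 1)((vᵀx)² - 1)] = Σⱼ (γ₄ⱼ - 3) uⱼ² vⱼ²`. -/
theorem covariance_quadratic_forms (m : ℕ) (Ω : Type*) [MeasurableSpace Ω]
    (μ : Measure Ω) [IsProbabilityMeasure μ]
    (X : Fin m → Ω → ℝ) (γ : Fin m → ℝ)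
    (hindep : iIndepFun X μ)
    (hL4 : ∀ j, MemLp (X j) 4 μ)
    (hmean : ∀ j, ∫ ω, X j ω ∂μ = 0)
    (hvar : ∀ j, ∫ ω, (X j ω) ^ 2 ∂μ = 1)
    (hkurt : ∀ j, ∫ ω, (X j ω) ^ 4 ∂μ = γ j)
    (u v : Fin m → ℝ) (hu : ∑ j, (u j) ^ 2 = 1) (hv : ∑ j, (v j) ^ 2 = 1)
    (huv : ∑ j, u j * v j = 0) :
    ∫ ω, ((∑ j, u j * X j ω) ^ 2 - 1) * ((∑ j, v j * X j ω) ^ 2 - 1) ∂μ =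
      ∑ j, (γ j - 3) * (u j) ^ 2 * (v j) ^ 2 := by
  have hL2 (j : Fin m) : MemLp (X j) 2 μ := (hL4 j).mono_exponent (by norm_num)
  have hform (w : Fin m → ℝ) : MemLp (fun ω => ∑ j, w j * X j ω) 4 μ :=
    memLp_finsetSum _ fun j _ => (hL4 j).const_mul (w j)
  have hS := ((hform u).mono_exponent (by norm_num)).integrable_sq
  have hT := ((hform v).mono_exponent (by norm_num)).integrable_sq
  have hST : Integrable (fun ω => (∑ j, u j * X j ω) ^ 2 * (∑ j, v j * X j ω) ^ 2) μ := by
    simpa [sq, mul_assoc] using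
      integrable_mul_mul_mul_of_memLp_four (hform u) (hform u) (hform v) (hform v)
  have hmoment₂ := hindep.integral_sq_sum_mul hL2 hmean hvar
  have hmoment₄ := hindep.integral_sq_sum_mul_mul_sq_sum_mul hL4 hmean hvar u v
  have hexpand (a b : ℝ) : (a ^ 2 - 1) * (b ^ 2 - 1) = a ^ 2 * b ^ 2 - a ^ 2 - b ^ 2 + 1 := by
    ring
  simp_rw [hexpand]
  simp (disch := fun_prop) only [integral_add, integral_sub, integral_const, hmoment₄, hmoment₂]
  simp [hu, hv, huv, hkurt]
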